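/- Let β > 0, θ₀ ∈ ℝ, θ₋₁ = θ₀ + β, and Z(θ) = ∑_{z∈ℤ} e^{θz − βz²/2}. Then with r(z) = e^{−β/2+βz} and for any integers ω₋₁, ω₀: (e^β − 1)·r(ω₋₁)·e^{−β ω₋₁}·Z(θ₋₁)/Z(θ₀) + (1 − e^{−β})·r(−ω₀)·e^{β(ω₀+1)}·Z(θ₀)/Z(θ₋₁) = (e^β − 1)e^{−β/2}·e^{β/2+θ₀} + (1 − e^{−β})e^{β/2}·e^{−β/2−θ₀}, a constant independent of ω₋₁ and ω₀. -/

import Mathlib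

/-!
The whole content is the shift identity `Z(θ + β) = e^{β/2 + θ} Z(θ)`, obtained by
re-indexing the sum with `z ↦ z - 1`. It turns both ratios of partition functions into
exponentials, and the remaining factors `r(ω₋₁) e^{-β ω₋₁}` and `r(-ω₀) e^{β(ω₀ + 1)}`
collapse to `e^{-β/2}` and `e^{β/2}`.
-/

open Real

noncomputable def gaussianPartition (β θ : ℝ) : ℝ :=
  ∑' z : ℤ, exp (θ * z - β * z ^ 2 / 2)

theorem summable_exp_mul_sub_mul_sq_div_two {β : ℝ} (hβ : 0 < β) (θ : ℝ) :
    Summable fun z : ℤ => exp (θ * z - β * z ^ 2 / 2) := by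
  -- the terms are the norms of the Jacobi theta terms at `z = -iθ/2π`, `τ = iβ/2π`
  have hτ : 0 < (Complex.I * (β / (2 * π) : ℝ)).im := by
    rw [Complex.I_mul_im, Complex.ofReal_re]; positivity
  have h := summable_norm_iff.mpr
    ((summable_jacobiTheta₂_term_iff (Complex.I * (-θ / (2 * π) : ℝ)) _).mpr hτ)
  refine h.congr fun n => ?_
  rw [norm_jacobiTheta₂_term, Complex.I_mul_im, Complex.I_mul_im, Complex.ofReal_re,
    Complex.ofReal_re]
  congr 1
  field_simp
  ring

theorem gaussianPartition_pos {β : ℝ} (hβ : 0 < β) (θ : ℝ) : 0 < gaussianPartition β θ :=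
  (summable_exp_mul_sub_mul_sq_div_two hβ θ).tsum_pos (fun _ => (exp_pos _).le) 0 (exp_pos _)

theorem gaussianPartition_add (β θ : ℝ) :
    gaussianPartition β (θ + β) = exp (β / 2 + θ) * gaussianPartition β θ := by
  rw [gaussianPartition, gaussianPartition, ← tsum_mul_left,
    ← (Equiv.addRight (1 : ℤ)).tsum_eq]
  congr 1 with z
  rw [← exp_add, Equiv.coe_addRight]
  push_cast
  ring_nf

theorem gaussianPartition_add_div {β : ℝ} (hβ : 0 < β) (θ : ℝ) :
    gaussianPartition β (θ + β) / gaussianPartition β θ = exp (β / 2 + θ) := by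
  rw [gaussianPartition_add, mul_div_cancel_right₀ _ (gaussianPartition_pos hβ θ).ne']

theorem stmt_16 (β : ℝ) (hβ : 0 < β) (θ₀ : ℝ)
    (Z : ℝ → ℝ) (hZ : ∀ t : ℝ, Z t = ∑' z : ℤ, Real.exp (t * z - β * z ^ 2 / 2))
    (r : ℤ → ℝ) (hr : ∀ z : ℤ, r z = Real.exp (-β/2 + β * z)) :
    ∀ wm1 w0 : ℤ,
      (Real.exp β - 1) * r wm1 * Real.exp (-β * wm1) * (Z (θ₀ + β) / Z θ₀) +
      (1 - Real.exp (-β)) * r (-w0) * Real.exp (β * (w0 + 1)) * (Z θ₀ / Z (θ₀ + β)) =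
      (Real.exp β - 1) * Real.exp (-β/2) * Real.exp (β/2 + θ₀) +
      (1 - Real.exp (-β)) * Real.exp (β/2) * Real.exp (-β/2 - θ₀) := by
  intro wm1 w0
  obtain rfl : Z = gaussianPartition β := funext hZ
  have hratio := gaussianPartition_add_div hβ θ₀
  have hratio_inv : gaussianPartition β θ₀ / gaussianPartition β (θ₀ + β) =
      exp (-β / 2 - θ₀) := by
    rw [← inv_div, hratio, ← exp_neg]
    ring_nf
  have hrate_left : r wm1 * exp (-β * wm1) = exp (-β / 2) := by
    rw [hr, ← exp_add]
    ring_nf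
  have hrate_right : r (-w0) * exp (β * (w0 + 1)) = exp (β / 2) := by
    rw [hr, ← exp_add]
    push_cast
    ring_nf
  rw [hratio, hratio_inv, mul_assoc (exp β - 1), hrate_left, mul_assoc (1 - exp (-β)),
    hrate_right]
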